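/- With the same setup (r = q^a, a ≤ 0), the quantum Serre combination also equals the reversed product form: Σ_{n=0}^{1-a} (-1)^n binom_q(1-a, n) w_{1-a-n,n}(x,y) = Σ_{n=0}^{1-a} (-1)^n binom_q(1-a, n) v_{1-a-n}(x) w_n(y). -/

import Mathlib

open Polynomial Finset

noncomputable section

/-- The indeterminate `q` in `ℚ(q)`. -/
def q : RatFunc ℚ := RatFunc.X

/-- The balanced quantum integer `[m]_q = (q^m - q^{-m})/(q - q^{-1})`. -/
def qnum (m : ℕ) : RatFunc ℚ := (q ^ (m : ℤ) - q ^ (-(m : ℤ))) / (q - q⁻¹)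

/-- The balanced quantum factorial `[m]_q!`. -/
def qfact : ℕ → RatFunc ℚ
  | 0 => 1
  | n + 1 => qfact n * qnum (n + 1)

/-- The balanced Gaussian binomial coefficient. -/
def qbinom (n k : ℕ) : RatFunc ℚ := qfact n / (qfact k * qfact (n - k))

/-!
Solving the recursion in `m` gives the closed form
`w_{m,n}(x, y) = Σ_k c_{m,n,k} B^k w_{m-k}(x) w_{n-k}(y)` with
`c_{m,n,k} = (-r)^k e_k(1, q², …, q^{2(m-1)}) ∏_{t<k} (1 - q^{2(n-t)})`,
checked against the recursion term by term with the three-term recursion of `w`.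
In the Serre combination only the terms with `k ≤ n` survive, and after the shear `n = j + k` the
coefficient of `B^k w_{N-j-2k}(x) w_j(y)` is `(-1)^j binom_q(N, j)` times the `k`-th coefficient
of `v_{N-j}`: writing `e_k(1, …, q^{2(m-1)}) = q^{k(m-1)} binom_q(m, k)` and the product as a
ratio of `q`-factorials, all powers of `q` collapse because `r = q^{1-N}`.
-/

lemma q_ne_zero : q ≠ 0 := RatFunc.X_ne_zero

lemma q_pow_ne_one {n : ℕ} (hn : n ≠ 0) : q ^ n ≠ 1 := by
  intro h
  have h' : algebraMap ℚ[X] (RatFunc ℚ) (X ^ n) = algebraMap ℚ[X] (RatFunc ℚ) 1 := by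
    simpa [RatFunc.algebraMap_X, q] using h
  have := congrArg natDegree (IsFractionRing.injective ℚ[X] (RatFunc ℚ) h')
  simp_all

lemma q_sub_q_inv_ne_zero : q - q⁻¹ ≠ 0 := by
  rw [sub_ne_zero, ne_eq, ← mul_eq_one_iff_eq_inv₀ q_ne_zero, ← sq]
  exact q_pow_ne_one two_ne_zero

lemma qnum_mul_q_sub_q_inv (n : ℕ) : qnum n * (q - q⁻¹) = q ^ n - (q ^ n)⁻¹ := by
  rw [qnum, div_mul_cancel₀ _ q_sub_q_inv_ne_zero, zpow_neg, zpow_natCast]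

lemma qnum_ne_zero {n : ℕ} (hn : n ≠ 0) : qnum n ≠ 0 := by
  intro h
  have h2 := qnum_mul_q_sub_q_inv n
  rw [h, zero_mul, eq_comm, sub_eq_zero, ← mul_eq_one_iff_eq_inv₀ (pow_ne_zero _ q_ne_zero),
    ← pow_add] at h2
  exact q_pow_ne_one (by omega) h2

lemma qfact_succ (n : ℕ) : qfact (n + 1) = qfact n * qnum (n + 1) := rfl

lemma qfact_ne_zero (n : ℕ) : qfact n ≠ 0 := by
  induction n with
  | zero => exact one_ne_zero
  | succ n ih => exact mul_ne_zero ih (qnum_ne_zero n.succ_ne_zero)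

lemma one_sub_q_pow_two_mul (n : ℕ) : 1 - q ^ (2 * n) = -(q ^ n * (q - q⁻¹) * qnum n) := by
  have := pow_ne_zero n q_ne_zero
  rw [mul_assoc, mul_comm (q - q⁻¹), qnum_mul_q_sub_q_inv]
  field_simp
  ring

lemma q_pow_mul_qnum_add (i j : ℕ) : q ^ j * qnum (i + j) = q ^ (i + j) * qnum j + qnum i := by
  have := q_ne_zero
  apply mul_right_cancel₀ q_sub_q_inv_ne_zero
  rw [mul_assoc, qnum_mul_q_sub_q_inv, add_mul, mul_assoc, qnum_mul_q_sub_q_inv,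
    qnum_mul_q_sub_q_inv]
  field_simp
  ring

/-- `esymmQSq m k` is the elementary symmetric polynomial `e_k(1, q², …, q^{2(m-1)})`,
given by its Pascal recursion. -/
def esymmQSq : ℕ → ℕ → RatFunc ℚ
  | _, 0 => 1
  | 0, _ + 1 => 0
  | m + 1, k + 1 => esymmQSq m (k + 1) + q ^ (2 * m) * esymmQSq m k

@[simp] lemma esymmQSq_zero_right (m : ℕ) : esymmQSq m 0 = 1 := by cases m <;> rfl

lemma esymmQSq_succ_succ (m k : ℕ) :
    esymmQSq (m + 1) (k + 1) = esymmQSq m (k + 1) + q ^ (2 * m) * esymmQSq m k := rfl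

lemma esymmQSq_eq_zero_of_lt : ∀ {m k : ℕ}, m < k → esymmQSq m k = 0
  | 0, _ + 1, _ => rfl
  | m + 1, k + 1, h => by
    rw [esymmQSq_succ_succ, esymmQSq_eq_zero_of_lt (by omega), esymmQSq_eq_zero_of_lt (by omega),
      mul_zero, add_zero]

lemma esymmQSq_mul_qfact : ∀ {m k : ℕ}, k ≤ m →
    esymmQSq m k * (qfact k * qfact (m - k)) * q ^ k = q ^ (k * m) * qfact m
  | _, 0, _ => by simp [qfact]
  | m + 1, k + 1, h => by
    have hfirst : esymmQSq m (k + 1) * (qfact (k + 1) * qfact (m - k)) * q ^ (k + 1)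
        = q ^ ((k + 1) * m) * qfact m * qnum (m - k) := by
      rcases Nat.lt_or_ge k m with hk | hk
      · obtain ⟨d, rfl⟩ := Nat.exists_eq_add_of_lt hk
        have ih := esymmQSq_mul_qfact (m := k + d + 1) (k := k + 1) (by omega)
        rw [show k + d + 1 - (k + 1) = d by omega] at ih
        rw [show k + d + 1 - k = d + 1 by omega, qfact_succ d]
        linear_combination qnum (d + 1) * ih
      · obtain rfl : k = m := by omega
        simp [esymmQSq_eq_zero_of_lt, qnum]
    have ih := esymmQSq_mul_qfact (m := m) (k := k) (by omega)
    have hqnum := q_pow_mul_qnum_add (m - k) (k + 1)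
    rw [show m - k + (k + 1) = m + 1 by omega] at hqnum
    rw [esymmQSq_succ_succ, Nat.add_sub_add_right, qfact_succ m]
    rw [qfact_succ k] at hfirst ⊢
    linear_combination hfirst + q ^ (2 * m + 1) * qnum (k + 1) * ih
      - q ^ ((k + 1) * m) * qfact m * hqnum

lemma qnum_mul_esymmQSq_succ {m k : ℕ} (h : k ≤ m) :
    qnum (m + 1 - k) * esymmQSq (m + 1) k = q ^ k * qnum (m + 1) * esymmQSq m k := by
  have h₁ := esymmQSq_mul_qfact (show k ≤ m + 1 by omega)
  have h₂ := esymmQSq_mul_qfact h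
  rw [show m + 1 - k = m - k + 1 by omega, qfact_succ, qfact_succ] at h₁
  rw [show m + 1 - k = m - k + 1 by omega]
  apply mul_right_cancel₀ (mul_ne_zero (mul_ne_zero (qfact_ne_zero k) (qfact_ne_zero (m - k)))
    (pow_ne_zero k q_ne_zero))
  linear_combination h₁ - q ^ k * qnum (m + 1) * h₂

lemma one_sub_mul_esymmQSq_succ (m k : ℕ) :
    (1 - q ^ (2 * (m + 1 - k))) * esymmQSq (m + 1) k = (1 - q ^ (2 * (m + 1))) * esymmQSq m k := by
  obtain hk | rfl | hk := lt_trichotomy k (m + 1)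
  · have hpow : q ^ (m + 1 - k) * q ^ k = q ^ (m + 1) := by
      rw [← pow_add, Nat.sub_add_cancel hk.le]
    rw [one_sub_q_pow_two_mul, one_sub_q_pow_two_mul]
    linear_combination
      (-(q ^ (m + 1 - k)) * (q - q⁻¹)) * qnum_mul_esymmQSq_succ (by omega : k ≤ m)
      - (q - q⁻¹) * qnum (m + 1) * esymmQSq m k * hpow
  · simp [esymmQSq_eq_zero_of_lt]
  · rw [esymmQSq_eq_zero_of_lt hk, esymmQSq_eq_zero_of_lt (by omega), mul_zero, mul_zero]

def wCoeff (a : ℤ) (m n k : ℕ) : RatFunc ℚ :=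
  (-q ^ a) ^ k * esymmQSq m k * ∏ t ∈ range k, (1 - q ^ (2 * (n - t)))

@[simp] lemma wCoeff_zero_right (a : ℤ) (m n : ℕ) : wCoeff a m n 0 = 1 := by
  simp [wCoeff]

lemma wCoeff_eq_zero_of_lt_left (a : ℤ) {m : ℕ} (n : ℕ) {k : ℕ} (h : m < k) :
    wCoeff a m n k = 0 := by
  rw [wCoeff, esymmQSq_eq_zero_of_lt h, mul_zero, zero_mul]

lemma wCoeff_eq_zero_of_lt_right (a : ℤ) (m : ℕ) {n k : ℕ} (h : n < k) :
    wCoeff a m n k = 0 := by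
  rw [wCoeff, prod_eq_zero (mem_range.mpr h) (by simp), mul_zero]

lemma wCoeff_succ_succ (a : ℤ) (m n k : ℕ) :
    wCoeff a (m + 1) n (k + 1) =
      wCoeff a m n (k + 1) - q ^ (2 * m) * (1 - q ^ (2 * n)) * q ^ a * wCoeff a m (n - 1) k := by
  have hprod : ∏ t ∈ range (k + 1), (1 - q ^ (2 * (n - t)))
      = (1 - q ^ (2 * n)) * ∏ t ∈ range k, (1 - q ^ (2 * (n - 1 - t))) := by
    rw [prod_range_succ', mul_comm, Nat.sub_zero]
    congr 1
    refine prod_congr rfl fun t _ => ?_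
    rw [Nat.sub_sub, Nat.add_comm 1 t]
  simp only [wCoeff, esymmQSq_succ_succ, hprod]
  ring

lemma wCoeff_succ_mul_one_sub (a : ℤ) (m n k : ℕ) :
    wCoeff a (m + 1) n k * (1 - q ^ (2 * (m + 1 - k)))
      = (1 - q ^ (2 * (m + 1))) * wCoeff a m n k := by
  simp only [wCoeff]
  linear_combination (-q ^ a) ^ k * (∏ t ∈ range k, (1 - q ^ (2 * (n - t)))) *
    one_sub_mul_esymmQSq_succ m k

lemma prod_one_sub_q_pow_mul_qfact (j : ℕ) : ∀ k : ℕ,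
    (∏ t ∈ range k, (1 - q ^ (2 * (j + k - t)))) * qfact j
      = (-1) ^ k * q ^ (j * k + k * (k + 1) / 2) * (q - q⁻¹) ^ k * qfact (j + k)
  | 0 => by simp
  | k + 1 => by
    have hshift : ∀ t ∈ range k,
        1 - q ^ (2 * (j + (k + 1) - (t + 1))) = 1 - q ^ (2 * (j + k - t)) := fun t _ => by
      rw [show j + (k + 1) - (t + 1) = j + k - t by omega]
    have htri : (k + 1) * (k + 1 + 1) / 2 = k * (k + 1) / 2 + (k + 1) := by
      have : (k + 1) * (k + 1 + 1) = k * (k + 1) + 2 * (k + 1) := by ring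
      omega
    rw [prod_range_succ', prod_congr rfl hshift, Nat.sub_zero, ← add_assoc, one_sub_q_pow_two_mul,
      qfact_succ, htri]
    linear_combination -(q ^ (j + k + 1) * (q - q⁻¹) * qnum (j + k + 1)) *
      prod_one_sub_q_pow_mul_qfact j k

def vCoeff (m k : ℕ) : RatFunc ℚ :=
  (-1 : RatFunc ℚ) ^ k * q ^ k * ((q - q⁻¹) ^ k * q ^ (-((k * (k + 1) / 2 : ℕ) : ℤ))) *
    (qfact m / (qfact (m - 2 * k) * qfact k))

lemma qbinom_mul_wCoeff {N j k : ℕ} (h : j + 2 * k ≤ N) :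
    (-1) ^ (j + k) * qbinom N (j + k) * wCoeff (1 - N) (N - (j + k)) (j + k) k
      = (-1) ^ j * qbinom N j * vCoeff (N - j) k := by
  obtain ⟨e, rfl⟩ := Nat.exists_eq_add_of_le h
  set T := k * (k + 1) / 2
  have hT2 : 2 * T = k * (k + 1) := Nat.mul_div_cancel' (Nat.even_mul_succ_self k).two_dvd
  have hq : (q ^ (1 - ((j + 2 * k + e : ℕ) : ℤ))) ^ k * q ^ (k * (k + e)) * q ^ (j * k + T) *
      q ^ T = q ^ k * q ^ k := by
    simp only [← zpow_natCast, ← zpow_mul, ← zpow_add₀ q_ne_zero]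
    congr 1
    push_cast
    linear_combination (by exact_mod_cast hT2 : (2 * T : ℤ) = k * (k + 1))
  have hsign : ((-1 : RatFunc ℚ) ^ k) ^ 2 = 1 := by
    rw [← pow_mul, pow_mul', neg_one_sq, one_pow]
  have hα : esymmQSq (k + e) k
      = q ^ (k * (k + e)) * qfact (k + e) / (qfact k * qfact e * q ^ k) := by
    have := esymmQSq_mul_qfact (show k ≤ k + e by omega)
    rw [Nat.add_sub_cancel_left] at this
    rw [eq_div_iff (by simp [qfact_ne_zero, q_ne_zero])]
    linear_combination this
  have hprod : ∏ t ∈ range k, (1 - q ^ (2 * (j + k - t)))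
      = (-1) ^ k * q ^ (j * k + T) * (q - q⁻¹) ^ k * qfact (j + k) / qfact j := by
    rw [eq_div_iff (qfact_ne_zero j)]
    exact prod_one_sub_q_pow_mul_qfact j k
  rw [qbinom, qbinom, vCoeff, wCoeff, show j + 2 * k + e - (j + k) = k + e by omega,
    show j + 2 * k + e - j = 2 * k + e by omega, show 2 * k + e - 2 * k = e by omega, hα, hprod,
    zpow_neg, zpow_natCast, neg_pow (q ^ _), pow_add]
  have := q_ne_zero
  field_simp [qfact_ne_zero]
  linear_combination ((q ^ 2 - 1) / q) ^ k * (((-1) ^ k) ^ 2 * hq + (q ^ k * q ^ k) * hsign)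

section ClosedForm

variable {M : Type*} [CommRing M] (B : M) (w : ℕ → M[X])

def wTerm (i j k : ℕ) : MvPolynomial (Fin 2) M :=
  MvPolynomial.C (B ^ k) * aeval (MvPolynomial.X 0) (w i) * aeval (MvPolynomial.X 1) (w j)

lemma wTerm_succ (i j k : ℕ) : wTerm B w i j (k + 1) = MvPolynomial.C B * wTerm B w i j k := by
  simp only [wTerm, pow_succ, map_mul]
  ring

variable [Algebra (RatFunc ℚ) M]

lemma MvPolynomial.C_smul_mul {σ : Type*} (r : RatFunc ℚ) (b : M) (p : MvPolynomial σ M) :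
    MvPolynomial.C (r • b) * p = r • (MvPolynomial.C b * p) := by
  rw [Algebra.smul_def, map_mul, Algebra.smul_def, mul_assoc]
  rfl

def wClosed (a : ℤ) (m n : ℕ) : MvPolynomial (Fin 2) M :=
  ∑ k ∈ range (m + 1), wCoeff a m n k • wTerm B w (m - k) (n - k) k

variable {B w}

lemma X_mul_wTerm (hw : ∀ i, X * w i = w (i + 1) + C ((1 - q ^ (2 * i)) • B) * w (i - 1))
    (i j k : ℕ) :
    MvPolynomial.X 0 * wTerm B w i j k
      = wTerm B w (i + 1) j k + (1 - q ^ (2 * i)) • wTerm B w (i - 1) j (k + 1) := by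
  have hx := congrArg (aeval (MvPolynomial.X 0 : MvPolynomial (Fin 2) M)) (hw i)
  simp only [map_mul, map_add, aeval_X, aeval_C, MvPolynomial.algebraMap_eq] at hx
  rw [wTerm_succ, ← MvPolynomial.C_smul_mul]
  simp only [wTerm]
  linear_combination MvPolynomial.C (B ^ k) * aeval (MvPolynomial.X 1) (w j) * hx

lemma X_mul_wClosed (hw : ∀ i, X * w i = w (i + 1) + C ((1 - q ^ (2 * i)) • B) * w (i - 1))
    (a : ℤ) (m n : ℕ) :
    MvPolynomial.X 0 * wClosed B w a m n
      = ∑ k ∈ range (m + 1), wCoeff a m n k • wTerm B w (m + 1 - k) (n - k) k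
        + MvPolynomial.C ((1 - q ^ (2 * m)) • B) * wClosed B w a (m - 1) n := by
  have hlower : ∑ k ∈ range (m + 1),
      (wCoeff a m n k * (1 - q ^ (2 * (m - k)))) • wTerm B w (m - k - 1) (n - k) (k + 1)
      = MvPolynomial.C ((1 - q ^ (2 * m)) • B) * wClosed B w a (m - 1) n := by
    rcases m with _ | m
    · simp
    rw [sum_range_succ, Nat.sub_self, mul_zero, pow_zero, sub_self, mul_zero, zero_smul, add_zero,
      Nat.add_sub_cancel, MvPolynomial.C_smul_mul, wClosed, mul_sum, smul_sum]
    refine sum_congr rfl fun k hk => ?_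
    rw [wCoeff_succ_mul_one_sub, wTerm_succ, mul_smul_comm, smul_smul,
      show m + 1 - k - 1 = m - k by omega]
  rw [wClosed, mul_sum, ← hlower, ← sum_add_distrib]
  refine sum_congr rfl fun k hk => ?_
  rw [mul_smul_comm, X_mul_wTerm hw, smul_add, mul_smul,
    show m - k + 1 = m + 1 - k by have := mem_range.mp hk; omega]

lemma wClosed_succ (a : ℤ) (m n : ℕ) :
    wClosed B w a (m + 1) n
      = ∑ k ∈ range (m + 1), wCoeff a m n k • wTerm B w (m + 1 - k) (n - k) k
        - MvPolynomial.C ((q ^ (2 * m) * (1 - q ^ (2 * n)) * q ^ a) • B) *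
            wClosed B w a m (n - 1) := by
  have hdrop : ∑ k ∈ range (m + 1 + 1), wCoeff a m n k • wTerm B w (m + 1 - k) (n - k) k
      = ∑ k ∈ range (m + 1), wCoeff a m n k • wTerm B w (m + 1 - k) (n - k) k := by
    rw [sum_range_succ, wCoeff_eq_zero_of_lt_left a n (Nat.lt_succ_self m), zero_smul, add_zero]
  rw [← hdrop, MvPolynomial.C_smul_mul, wClosed, wClosed, mul_sum, smul_sum, sum_range_succ',
    sum_range_succ' _ (m + 1), wCoeff_zero_right, wCoeff_zero_right, add_sub_right_comm,
    ← sum_sub_distrib]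
  congr 1
  refine sum_congr rfl fun k _ => ?_
  rw [wCoeff_succ_succ, sub_smul, Nat.add_sub_add_right, show n - (k + 1) = n - 1 - k by omega,
    wTerm_succ, mul_smul_comm, smul_smul]

lemma wClosed_recursion (hw : ∀ i, X * w i = w (i + 1) + C ((1 - q ^ (2 * i)) • B) * w (i - 1))
    (a : ℤ) (m n : ℕ) :
    MvPolynomial.X 0 * wClosed B w a m n =
      wClosed B w a (m + 1) n
      + (if m = 0 then 0 else MvPolynomial.C ((1 - q ^ (2 * m)) • B) * wClosed B w a (m - 1) n)
      + (if n = 0 then 0 else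
          MvPolynomial.C ((q ^ (2 * m) * (1 - q ^ (2 * n)) * q ^ a) • B) *
            wClosed B w a m (n - 1)) := by
  rw [ite_eq_right_iff.mpr fun hm => ?_, ite_eq_right_iff.mpr fun hn => ?_, X_mul_wClosed hw,
    wClosed_succ]
  · abel
  all_goals simp_all

lemma eq_wClosed (hw0 : w 0 = 1)
    (hw : ∀ i, X * w i = w (i + 1) + C ((1 - q ^ (2 * i)) • B) * w (i - 1)) (a : ℤ)
    (W : ℕ → ℕ → MvPolynomial (Fin 2) M)
    (hW0 : ∀ n, W 0 n = aeval (MvPolynomial.X 1 : MvPolynomial (Fin 2) M) (w n))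
    (hWrec : ∀ m n : ℕ,
      MvPolynomial.X 0 * W m n =
        W (m + 1) n
        + (if m = 0 then 0 else MvPolynomial.C ((1 - q ^ (2 * m)) • B) * W (m - 1) n)
        + (if n = 0 then 0 else
            MvPolynomial.C ((q ^ (2 * m) * (1 - q ^ (2 * n)) * q ^ a) • B) * W m (n - 1)))
    (m n : ℕ) : W m n = wClosed B w a m n := by
  induction m using Nat.strong_induction_on generalizing n with
  | _ m ih =>
    rcases m with _ | m
    · simp [hW0, wClosed, wTerm, hw0]
    have hW := hWrec m n
    simp only [ih m (by omega), ih (m - 1) (by omega)] at hW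
    linear_combination wClosed_recursion hw a m n - hW

lemma aeval_v_mul_aeval_w_eq_sum {v : ℕ → M[X]}
    (hv : ∀ m, v m = ∑ k ∈ range (m / 2 + 1), C (vCoeff m k • B ^ k) * w (m - 2 * k))
    (m j : ℕ) :
    aeval (MvPolynomial.X 0 : MvPolynomial (Fin 2) M) (v m) * aeval (MvPolynomial.X 1) (w j)
      = ∑ k ∈ range (m / 2 + 1), vCoeff m k • wTerm B w (m - 2 * k) j k := by
  rw [hv, map_sum, sum_mul]
  refine sum_congr rfl fun k _ => ?_
  rw [map_mul, aeval_C, MvPolynomial.algebraMap_eq, mul_assoc, MvPolynomial.C_smul_mul, wTerm,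
    mul_assoc]

end ClosedForm

lemma sum_sum_range_sub_shear {β : Type*} [AddCommMonoid β] (N : ℕ) (f : ℕ → ℕ → β)
    (hf : ∀ n k, n < k → f n k = 0) :
    ∑ n ∈ range (N + 1), ∑ k ∈ range (N - n + 1), f n k
      = ∑ j ∈ range (N + 1), ∑ k ∈ range ((N - j) / 2 + 1), f (j + k) k := by
  rw [sum_sigma', sum_sigma']
  symm
  refine sum_of_injOn (fun p => ⟨p.1 + p.2, p.2⟩) ?_ ?_ ?_ fun _ _ => rfl
  · rintro ⟨j, k⟩ - ⟨j', k'⟩ - h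
    simp only [Sigma.mk.injEq, heq_eq_eq] at h
    obtain ⟨h₁, rfl⟩ := h
    obtain rfl : j = j' := by omega
    rfl
  · rintro ⟨j, k⟩ h
    simp only [coe_sigma, Set.mem_sigma_iff, mem_coe, mem_range] at h ⊢
    omega
  · rintro ⟨n, k⟩ h hn
    refine hf n k (not_le.mp fun hkn => hn ⟨⟨n - k, k⟩, ?_, ?_⟩)
    · simp only [mem_sigma, mem_range] at h
      simp only [coe_sigma, Set.mem_sigma_iff, mem_coe, mem_range]
      omega
    · simp only [Sigma.mk.injEq, heq_eq_eq, and_true]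
      omega

theorem stmt5_general {M : Type*} [CommRing M] [Algebra (RatFunc ℚ) M] (B : M)
    (a : ℤ) (N : ℕ) (hN : (N : ℤ) = 1 - a)
    (w : ℕ → Polynomial M)
    (hw0 : w 0 = 1) (hw1 : w 1 = X)
    (hwrec : ∀ m : ℕ, 1 ≤ m →
      X * w m = w (m + 1) + C ((1 - q ^ (2 * m)) • B) * w (m - 1))
    (v : ℕ → Polynomial M)
    (hv : ∀ m : ℕ, v m = ∑ k ∈ range (m / 2 + 1),
      C ((((-1 : RatFunc ℚ) ^ k * q ^ k * ((q - q⁻¹) ^ k * q ^ (-((k * (k + 1) / 2 : ℕ) : ℤ))) *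
        (qfact m / (qfact (m - 2 * k) * qfact k)))) • B ^ k) * w (m - 2 * k))
    (W : ℕ → ℕ → MvPolynomial (Fin 2) M)
    (hW0 : ∀ n, W 0 n = Polynomial.aeval (MvPolynomial.X 1 : MvPolynomial (Fin 2) M) (w n))
    (hWrec : ∀ m n : ℕ,
      MvPolynomial.X 0 * W m n =
        W (m + 1) n
        + (if m = 0 then 0 else MvPolynomial.C ((1 - q ^ (2 * m)) • B) * W (m - 1) n)
        + (if n = 0 then 0 else
            MvPolynomial.C ((q ^ (2 * m) * (1 - q ^ (2 * n)) * q ^ a) • B) * W m (n - 1))) :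
    ∑ n ∈ range (N + 1), ((-1 : RatFunc ℚ) ^ n * qbinom N n) • W (N - n) n
      = ∑ n ∈ range (N + 1), ((-1 : RatFunc ℚ) ^ n * qbinom N n) •
          (Polynomial.aeval (MvPolynomial.X 0 : MvPolynomial (Fin 2) M) (v (N - n)) *
           Polynomial.aeval (MvPolynomial.X 1 : MvPolynomial (Fin 2) M) (w n)) := by
  have hw : ∀ i, X * w i = w (i + 1) + C ((1 - q ^ (2 * i)) • B) * w (i - 1) := by
    rintro (_ | i)
    · simp [hw0, hw1]
    · exact hwrec (i + 1) i.succ_pos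
  obtain rfl : a = 1 - N := by omega
  calc ∑ n ∈ range (N + 1), ((-1 : RatFunc ℚ) ^ n * qbinom N n) • W (N - n) n
      = ∑ n ∈ range (N + 1), ∑ k ∈ range (N - n + 1),
          ((-1) ^ n * qbinom N n * wCoeff (1 - N) (N - n) n k) •
            wTerm B w (N - n - k) (n - k) k := by
        refine sum_congr rfl fun n _ => ?_
        simp only [eq_wClosed hw0 hw _ W hW0 hWrec, wClosed, smul_sum, smul_smul]
    _ = ∑ j ∈ range (N + 1), ∑ k ∈ range ((N - j) / 2 + 1),
          ((-1) ^ (j + k) * qbinom N (j + k) * wCoeff (1 - N) (N - (j + k)) (j + k) k) •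
            wTerm B w (N - (j + k) - k) (j + k - k) k :=
        sum_sum_range_sub_shear N _ fun n k h => by
          rw [wCoeff_eq_zero_of_lt_right _ _ h, mul_zero, zero_smul]
    _ = _ := by
        refine sum_congr rfl fun j hj => ?_
        rw [aeval_v_mul_aeval_w_eq_sum hv, smul_sum]
        refine sum_congr rfl fun k hk => ?_
        have hk : j + 2 * k ≤ N := by have := mem_range.mp hj; have := mem_range.mp hk; omega
        rw [smul_smul, qbinom_mul_wCoeff hk, Nat.add_sub_cancel,
          show N - (j + k) - k = N - j - 2 * k by omega]

/-- for `r = q^a` with `a ≤ 0`, the quantum Serre combination of the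
bivariate polynomials `w_{m,n}` equals the product form
`Σ (-1)^n binom_q(1-a,n) v_{1-a-n}(x) w_n(y)` (reversed product form). -/
theorem stmt5 {M : Type*} [CommRing M] [Algebra (RatFunc ℚ) M] (B : M)
    (a : ℤ) (ha : a ≤ 0) (N : ℕ) (hN : (N : ℤ) = 1 - a)
    (w : ℕ → Polynomial M)
    (hw0 : w 0 = 1) (hw1 : w 1 = X)
    (hwrec : ∀ m : ℕ, 1 ≤ m →
      X * w m = w (m + 1) + C ((1 - q ^ (2 * m)) • B) * w (m - 1))
    (v : ℕ → Polynomial M)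
    (hv : ∀ m : ℕ, v m = ∑ k ∈ range (m / 2 + 1),
      C ((((-1 : RatFunc ℚ) ^ k * q ^ k * ((q - q⁻¹) ^ k * q ^ (-((k * (k + 1) / 2 : ℕ) : ℤ))) *
        (qfact m / (qfact (m - 2 * k) * qfact k)))) • B ^ k) * w (m - 2 * k))
    (W : ℕ → ℕ → MvPolynomial (Fin 2) M)
    (hW0 : ∀ n, W 0 n = Polynomial.aeval (MvPolynomial.X 1 : MvPolynomial (Fin 2) M) (w n))
    (hWrec : ∀ m n : ℕ,
      MvPolynomial.X 0 * W m n =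
        W (m + 1) n
        + (if m = 0 then 0 else MvPolynomial.C ((1 - q ^ (2 * m)) • B) * W (m - 1) n)
        + (if n = 0 then 0 else
            MvPolynomial.C ((q ^ (2 * m) * (1 - q ^ (2 * n)) * q ^ a) • B) * W m (n - 1))) :
    ∑ n ∈ range (N + 1), ((-1 : RatFunc ℚ) ^ n * qbinom N n) • W (N - n) n
      = ∑ n ∈ range (N + 1), ((-1 : RatFunc ℚ) ^ n * qbinom N n) •
          (Polynomial.aeval (MvPolynomial.X 0 : MvPolynomial (Fin 2) M) (v (N - n)) *
           Polynomial.aeval (MvPolynomial.X 1 : MvPolynomial (Fin 2) M) (w n)) :=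
  stmt5_general B a N hN w hw0 hw1 hwrec v hv W hW0 hWrec
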